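/- Let G be a topological group and H a subgroup that is a strong deformation retract of G, i.e. there is a continuous map F : G × [0,1] → G with F(g,0) = g for all g ∈ G, F(g,1) ∈ H for all g ∈ G, and F(h,t) = h for all h ∈ H and t ∈ [0,1]. Let X, Y, Z be subsets of a normal topological space M with closure(X) ∩ closure(Y) = ∅, and let β : Z → G be continuous. Then there exists a continuous β' : Z → G such that (1) β'(x) ∈ H for all x ∈ X ∩ Z, (2) β'(y) = β(y) for all y ∈ Y ∩ Z, and (3) for all u ∈ Z, if β(u) ∈ H then β'(u) ∈ H. -/

import Mathlib

open Set

/- Push `β` along the deformation for the time given by a Urysohn function `f` that is `1` on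
`closure X` and `0` on `closure Y`: `β' u = F (β u, f u)`. -/
theorem stmt0_general {G M : Type*} [TopologicalSpace G] [Group G]
    [TopologicalSpace M] [NormalSpace M]
    (H : Subgroup G) (F : G × ℝ → G)
    (hFcont : Continuous F)
    (hF0 : ∀ g : G, F (g, 0) = g)
    (hF1 : ∀ g : G, F (g, 1) ∈ H)
    (hFH : ∀ h ∈ H, ∀ t ∈ Icc (0:ℝ) 1, F (h, t) = h)
    (X Y Z : Set M) (hXY : closure X ∩ closure Y = ∅)
    (β : M → G) (hβ : ContinuousOn β Z) :
    ∃ β' : M → G, ContinuousOn β' Z ∧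
      (∀ x ∈ X ∩ Z, β' x ∈ H) ∧
      (∀ y ∈ Y ∩ Z, β' y = β y) ∧
      (∀ u ∈ Z, β u ∈ H → β' u ∈ H) := by
  obtain ⟨f, hfY, hfX, hf01⟩ := exists_continuous_zero_one_of_isClosed
    isClosed_closure isClosed_closure (disjoint_iff_inter_eq_empty.mpr hXY).symm
  refine ⟨fun u => F (β u, f u), hFcont.comp_continuousOn (hβ.prodMk f.continuous.continuousOn),
    fun x hx => ?_, fun y hy => ?_, fun u _ hu => ?_⟩
  · dsimp only
    rw [hfX (subset_closure hx.1)]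
    exact hF1 _
  · dsimp only
    rw [hfY (subset_closure hy.1)]
    exact hF0 _
  · simpa only [hFH _ hu _ (hf01 u)] using hu

/-- If a subgroup `H` is a strong deformation retract of a topological group `G`
(via `F`), `M` is a normal space, and `X, Y ⊆ M` have disjoint closures, then any
continuous `β : Z → G` can be modified to `β'` that lands in `H` on `X ∩ Z`,
agrees with `β` on `Y ∩ Z`, and stays in `H` wherever `β` was in `H`. -/
theorem stmt0 {G M : Type*} [TopologicalSpace G] [Group G] [IsTopologicalGroup G]
    [TopologicalSpace M] [NormalSpace M]
    (H : Subgroup G) (F : G × ℝ → G)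
    (hFcont : Continuous F)
    (hF0 : ∀ g : G, F (g, 0) = g)
    (hF1 : ∀ g : G, F (g, 1) ∈ H)
    (hFH : ∀ h ∈ H, ∀ t ∈ Icc (0:ℝ) 1, F (h, t) = h)
    (X Y Z : Set M) (hXY : closure X ∩ closure Y = ∅)
    (β : M → G) (hβ : ContinuousOn β Z) :
    ∃ β' : M → G, ContinuousOn β' Z ∧
      (∀ x ∈ X ∩ Z, β' x ∈ H) ∧
      (∀ y ∈ Y ∩ Z, β' y = β y) ∧
      (∀ u ∈ Z, β u ∈ H → β' u ∈ H) :=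
  stmt0_general H F hFcont hF0 hF1 hFH X Y Z hXY β hβ
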